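/- arXiv:math-ph/0512058 — 6 statements merged into one kernel-verified Lean document; each statement's English description precedes it below -/
import Mathlib

section
/- For any piecewise smooth functions φ, φ₀ : ℝ → ℝ, define P₀(t) = ∫₀ᵗ cos(φ₀(s)) ds, Q₀(t) = ∫₀ᵗ exp(-P₀(s)) sin(φ₀(s)) ds, ζ = exp(iφ), ζ₀ = exp(iφ₀), and C⁻¹ = -Q₀ + i·exp(-P₀)·(ζ₀+ζ)/(ζ₀-ζ). Then (1/(2i))·(ζ-ζ₀)²·exp(P₀)·d(C⁻¹)/dt = ζ₀·D[ζ] - ζ·D[ζ₀], where D[z] = dz/dt + (z²-1)/2 - i·f·z for any function f. -/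
set_option maxHeartbeats 1600000 in
/-- Master identity: with `P₀ Q₀` the integrals built from `φ₀`,
`ζ = exp(iφ)`, `ζ₀ = exp(iφ₀)`, and `C⁻¹ = -Q₀ + i e^{-P₀}(ζ₀+ζ)/(ζ₀-ζ)`,
one has `(1/(2i)) (ζ-ζ₀)² e^{P₀} d(C⁻¹)/dt = ζ₀ D[ζ] - ζ D[ζ₀]`,
where `D[z] = z' + (z²-1)/2 - i f z`. -/
theorem stmt0 (φ φ₀ f P₀ Q₀ : ℝ → ℝ) (t φ' φ₀' : ℝ)
    (hφ : HasDerivAt φ φ' t) (hφ₀ : HasDerivAt φ₀ φ₀' t)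
    (hP : HasDerivAt P₀ (Real.cos (φ₀ t)) t)
    (hQ : HasDerivAt Q₀ (Real.exp (-P₀ t) * Real.sin (φ₀ t)) t)
    (hne : Complex.exp (Complex.I * φ₀ t) ≠ Complex.exp (Complex.I * φ t)) :
    ∃ d : ℂ,
      HasDerivAt (fun s : ℝ =>
        -(Q₀ s : ℂ) + Complex.I * Complex.exp (-(P₀ s : ℂ)) *
          ((Complex.exp (Complex.I * φ₀ s) + Complex.exp (Complex.I * φ s)) /
           (Complex.exp (Complex.I * φ₀ s) - Complex.exp (Complex.I * φ s)))) d t ∧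
      (1 / (2 * Complex.I)) *
          (Complex.exp (Complex.I * φ t) - Complex.exp (Complex.I * φ₀ t)) ^ 2 *
          Complex.exp (P₀ t : ℂ) * d =
        Complex.exp (Complex.I * φ₀ t) *
            (Complex.I * φ' * Complex.exp (Complex.I * φ t) +
              (Complex.exp (Complex.I * φ t) ^ 2 - 1) / 2 -
              Complex.I * f t * Complex.exp (Complex.I * φ t)) -
          Complex.exp (Complex.I * φ t) *
            (Complex.I * φ₀' * Complex.exp (Complex.I * φ₀ t) +
              (Complex.exp (Complex.I * φ₀ t) ^ 2 - 1) / 2 -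
              Complex.I * f t * Complex.exp (Complex.I * φ₀ t)) := by
  set ζ := Complex.exp (Complex.I * φ t) with hζ
  set ζ₀ := Complex.exp (Complex.I * φ₀ t) with hζ₀
  have hsub : ζ₀ - ζ ≠ 0 := sub_ne_zero.mpr hne
  -- derivatives of the pieces
  have hQc : HasDerivAt (fun s : ℝ => (Q₀ s : ℂ))
      ((Real.exp (-P₀ t) * Real.sin (φ₀ t) : ℝ) : ℂ) t := hQ.ofReal_comp
  have hPc : HasDerivAt (fun s : ℝ => (P₀ s : ℂ)) ((Real.cos (φ₀ t) : ℝ) : ℂ) t :=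
    hP.ofReal_comp
  have hE : HasDerivAt (fun s : ℝ => Complex.exp (-(P₀ s : ℂ)))
      (-(Real.cos (φ₀ t) : ℂ) * Complex.exp (-(P₀ t : ℂ))) t := by
    simpa [mul_comm] using hPc.neg.cexp
  have hz : HasDerivAt (fun s : ℝ => Complex.exp (Complex.I * φ s))
      (Complex.I * φ' * ζ) t := by
    have := (hφ.ofReal_comp.const_mul Complex.I).cexp
    simpa [mul_comm, hζ] using this
  have hz₀ : HasDerivAt (fun s : ℝ => Complex.exp (Complex.I * φ₀ s))
      (Complex.I * φ₀' * ζ₀) t := by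
    have := (hφ₀.ofReal_comp.const_mul Complex.I).cexp
    simpa [mul_comm, hζ₀] using this
  have hratio : HasDerivAt (fun s : ℝ =>
      (Complex.exp (Complex.I * φ₀ s) + Complex.exp (Complex.I * φ s)) /
      (Complex.exp (Complex.I * φ₀ s) - Complex.exp (Complex.I * φ s)))
      (((Complex.I * φ₀' * ζ₀ + Complex.I * φ' * ζ) * (ζ₀ - ζ) -
        (ζ₀ + ζ) * (Complex.I * φ₀' * ζ₀ - Complex.I * φ' * ζ)) / (ζ₀ - ζ) ^ 2) t :=
    (hz₀.add hz).div (hz₀.sub hz) hsub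
  have hF : HasDerivAt (fun s : ℝ =>
      -(Q₀ s : ℂ) + Complex.I * Complex.exp (-(P₀ s : ℂ)) *
        ((Complex.exp (Complex.I * φ₀ s) + Complex.exp (Complex.I * φ s)) /
         (Complex.exp (Complex.I * φ₀ s) - Complex.exp (Complex.I * φ s))))
      (-((Real.exp (-P₀ t) * Real.sin (φ₀ t) : ℝ) : ℂ) +
        (Complex.I * (-(Real.cos (φ₀ t) : ℂ) * Complex.exp (-(P₀ t : ℂ))) *
          ((ζ₀ + ζ) / (ζ₀ - ζ)) +
         Complex.I * Complex.exp (-(P₀ t : ℂ)) *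
          (((Complex.I * φ₀' * ζ₀ + Complex.I * φ' * ζ) * (ζ₀ - ζ) -
            (ζ₀ + ζ) * (Complex.I * φ₀' * ζ₀ - Complex.I * φ' * ζ)) / (ζ₀ - ζ) ^ 2))) t := by
    exact hQc.neg.add (((hE.const_mul Complex.I).mul hratio).congr_deriv (by ring))
  refine ⟨_, hF, ?_⟩
  -- now the algebraic identity
  have e1 : Complex.exp ((φ₀ t : ℂ) * Complex.I) = ζ₀ := by rw [hζ₀, mul_comm]
  have e2 : Complex.exp (-((φ₀ t : ℂ) * Complex.I)) = ζ₀⁻¹ := by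
    rw [Complex.exp_neg, e1]
  have hz0ne : ζ₀ ≠ 0 := Complex.exp_ne_zero _
  have hPne : Complex.exp ((P₀ t : ℂ)) ≠ 0 := Complex.exp_ne_zero _
  have hEE : Complex.exp (-(P₀ t : ℂ)) = (Complex.exp ((P₀ t : ℂ)))⁻¹ :=
    Complex.exp_neg _
  have hkey : ∀ (a b E u p q F : ℂ), u ≠ 0 → a ≠ 0 → E ≠ 0 → b = a - u →
      1 / (2 * Complex.I) * (b - a) ^ 2 * E *
        (-(E⁻¹ * ((a⁻¹ - a) * Complex.I / 2)) +
          (Complex.I * (-((a + a⁻¹) / 2 * E⁻¹)) * ((a + b) / (a - b)) +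
            Complex.I * E⁻¹ *
              (((Complex.I * p * a + Complex.I * q * b) * (a - b) -
                (a + b) * (Complex.I * p * a - Complex.I * q * b)) / (a - b) ^ 2))) =
      a * (Complex.I * q * b + (b ^ 2 - 1) / 2 - Complex.I * F * b) -
        b * (Complex.I * p * a + (a ^ 2 - 1) / 2 - Complex.I * F * a) := by
    rintro a b E u p q F hu ha hE hb
    subst hb
    have h2 : a - (a - u) = u := by ring
    rw [h2]
    have h1 : a * a⁻¹ = 1 := mul_inv_cancel₀ ha
    have hh2 : E * E⁻¹ = 1 := mul_inv_cancel₀ hE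
    have h3 : u * u⁻¹ = 1 := mul_inv_cancel₀ hu
    have h5 : Complex.I * Complex.I⁻¹ = 1 := mul_inv_cancel₀ Complex.I_ne_zero
    linear_combination
      ((-1/2 : ℂ) * E * u^2 * Complex.I * E⁻¹ * u⁻¹ * Complex.I⁻¹) * h1 +
      ((-1/2 : ℂ) * u^2 * Complex.I * u⁻¹ * Complex.I⁻¹ + (-1/4 : ℂ) * u^2 * Complex.I * a⁻¹ * Complex.I⁻¹ + (1/4 : ℂ) * u^3 * Complex.I * a⁻¹ * u⁻¹ * Complex.I⁻¹ + (1/4 : ℂ) * a * u^2 * Complex.I * Complex.I⁻¹ + (1/4 : ℂ) * a * u^3 * Complex.I * u⁻¹ * Complex.I⁻¹ + (-1 : ℂ) * a * u^3 * q * Complex.I^2 * u⁻¹^2 * Complex.I⁻¹ + a * u^3 * p * Complex.I^2 * u⁻¹^2 * Complex.I⁻¹ + (-1/2 : ℂ) * a^2 * u^2 * Complex.I * u⁻¹ * Complex.I⁻¹ + a^2 * u^2 * q * Complex.I^2 * u⁻¹^2 * Complex.I⁻¹ + (-1 : ℂ) * a^2 * u^2 * p * Complex.I^2 * u⁻¹^2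 * Complex.I⁻¹) * hh2 +
      ((-1/2 : ℂ) * u * Complex.I * Complex.I⁻¹ + (1/4 : ℂ) * u^2 * Complex.I * a⁻¹ * Complex.I⁻¹ + (-1 : ℂ) * a * u * q * Complex.I + a * u * p * Complex.I + (1/4 : ℂ) * a * u^2 * Complex.I * Complex.I⁻¹ + (-1 : ℂ) * a * u^2 * q * Complex.I^2 * u⁻¹ * Complex.I⁻¹ + a * u^2 * p * Complex.I^2 * u⁻¹ * Complex.I⁻¹ + a^2 * q * Complex.I + (-1 : ℂ) * a^2 * p * Complex.I + (-1/2 : ℂ) * a^2 * u * Complex.I * Complex.I⁻¹ + a^2 * u * q * Complex.I^2 * u⁻¹ * Complex.I⁻¹ + (-1 : ℂ) * a^2 * u * p * Complex.I^2 * u⁻¹ * Complex.I⁻¹) * h3 +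
      ((-1/2 : ℂ) * u + (1/2 : ℂ) * a * u^2 + (-1 : ℂ) * a * u^2 * q * Complex.I * u⁻¹ + a * u^2 * p * Complex.I * u⁻¹ + (-1/2 : ℂ) * a^2 * u + a^2 * u * q * Complex.I * u⁻¹ + (-1 : ℂ) * a^2 * u * p * Complex.I * u⁻¹) * h5
  push_cast
  rw [Complex.exp_neg ((P₀ t : ℂ))]
  simp only [Complex.sin, Complex.cos, neg_mul, e1, e2]
  exact hkey ζ₀ ζ (Complex.exp ((P₀ t : ℂ))) (ζ₀ - ζ) φ₀' φ' (f t) hsub hz0ne hPne (by ring)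
end

section
/- Let φ₀ solve φ₀' + sin φ₀ = f with φ₀(0) = 0, and let P₀(t) = ∫₀ᵗ cos φ₀, Q₀(t) = ∫₀ᵗ e^{-P₀} sin φ₀. For any real constant C, the function φ defined (mod 2π) by exp(iφ) = exp(iφ₀)·(1 + C(Q₀ - i e^{-P₀}))/(1 + C(Q₀ + i e^{-P₀})) also solves φ' + sin φ = f. -/
/-!
Under `z = exp(iφ)` the equation `φ' + sin φ = f` becomes the Riccati equation
`z' = i f z + (1 - z²)/2`. The numerator `N = 1 + C(Q₀ - i e^{-P₀})` and denominator
`D = 1 + C(Q₀ + i e^{-P₀})` satisfy `N' = w / z₀`, `D' = -w z₀` and `D - N = 2w` with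
`w = i C e^{-P₀}`, and a direct computation shows that any such pair carries a solution `z₀`
of the Riccati equation to the solution `z₀ N / D`.
-/

open Complex

namespace Josephson

noncomputable def riccati (f : ℝ) (z : ℂ) : ℂ := I * f * z + (1 - z ^ 2) / 2

theorem add_sin_eq_iff_riccati (φ φ' f : ℝ) :
    φ' + Real.sin φ = f ↔ cexp (I * φ) * (I * φ') = riccati f (cexp (I * φ)) := by
  have hz0 : cexp (I * φ) ≠ 0 := Complex.exp_ne_zero _
  have hinv : cexp (-(I * φ)) * cexp (I * φ) = 1 := by
    rw [← Complex.exp_add, neg_add_cancel, Complex.exp_zero]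
  have hsin : Complex.sin φ * (2 * I) = cexp (I * φ) - cexp (-(I * φ)) := by
    rw [Complex.sin]
    ring_nf
    rw [I_sq]
    ring_nf
  rw [← Complex.ofReal_inj, riccati]
  push_cast
  constructor
  · intro h
    rw [← h]
    linear_combination (-cexp (I * φ) / 2) * hsin + hinv / 2
  · intro h
    apply mul_left_cancel₀ (mul_ne_zero I_ne_zero hz0)
    linear_combination h + (cexp (I * φ) / 2) * hsin - hinv / 2

variable {φ' f t : ℝ}

theorem hasDerivAt_cexp_of_add_sin_eq {φ : ℝ → ℝ} (hφ : HasDerivAt φ φ' t)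
    (h : φ' + Real.sin (φ t) = f) :
    HasDerivAt (fun s => cexp (I * φ s)) (riccati f (cexp (I * φ t))) t :=
  (hφ.ofReal_comp.const_mul I).cexp.congr_deriv ((add_sin_eq_iff_riccati _ _ _).mp h)

theorem add_sin_eq_of_hasDerivAt_cexp {φ : ℝ → ℝ} (hφ : HasDerivAt φ φ' t)
    (h : HasDerivAt (fun s => cexp (I * φ s)) (riccati f (cexp (I * φ t))) t) :
    φ' + Real.sin (φ t) = f :=
  (add_sin_eq_iff_riccati _ _ _).mpr ((hφ.ofReal_comp.const_mul I).cexp.unique h)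

theorem hasDerivAt_riccati_mul_div {z N D : ℝ → ℂ} {w : ℂ}
    (hz : HasDerivAt z (riccati f (z t)) t) (hN : HasDerivAt N (w / z t) t)
    (hD : HasDerivAt D (-(w * z t)) t) (hw : D t - N t = 2 * w) (hz0 : z t ≠ 0)
    (hD0 : D t ≠ 0) :
    HasDerivAt (fun s => z s * N s / D s) (riccati f (z t * N t / D t)) t := by
  refine ((hz.fun_mul hN).fun_div hD hD0).congr_deriv ?_
  unfold riccati
  field_simp
  linear_combination (-(z t ^ 2 * N t + D t)) * hw

variable {φ₀ P₀ Q₀ : ℝ → ℝ}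

theorem hasDerivAt_numerator (C : ℝ) (hP : HasDerivAt P₀ (Real.cos (φ₀ t)) t)
    (hQ : HasDerivAt Q₀ (Real.exp (-P₀ t) * Real.sin (φ₀ t)) t) :
    HasDerivAt (fun s => 1 + (C : ℂ) * ((Q₀ s : ℂ) - I * cexp (-(P₀ s : ℂ))))
      (I * C * cexp (-(P₀ t : ℂ)) / cexp (I * φ₀ t)) t := by
  have hb := hP.ofReal_comp.fun_neg.cexp
  refine ((hQ.ofReal_comp.sub (hb.const_mul I)).const_mul (C : ℂ) |>.const_add 1).congr_deriv ?_
  rw [div_eq_mul_inv, ← Complex.exp_neg, show -(I * (φ₀ t : ℂ)) = (-φ₀ t : ℂ) * I by ring,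
    exp_mul_I, cos_neg, sin_neg]
  push_cast
  linear_combination (C * cexp (-(P₀ t : ℂ)) * sin (φ₀ t : ℂ)) * I_sq

theorem hasDerivAt_denominator (C : ℝ) (hP : HasDerivAt P₀ (Real.cos (φ₀ t)) t)
    (hQ : HasDerivAt Q₀ (Real.exp (-P₀ t) * Real.sin (φ₀ t)) t) :
    HasDerivAt (fun s => 1 + (C : ℂ) * ((Q₀ s : ℂ) + I * cexp (-(P₀ s : ℂ))))
      (-(I * C * cexp (-(P₀ t : ℂ)) * cexp (I * φ₀ t))) t := by
  have hb := hP.ofReal_comp.fun_neg.cexp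
  refine ((hQ.ofReal_comp.add (hb.const_mul I)).const_mul (C : ℂ) |>.const_add 1).congr_deriv ?_
  rw [mul_comm I (φ₀ t : ℂ), exp_mul_I]
  push_cast
  linear_combination (C * cexp (-(P₀ t : ℂ)) * sin (φ₀ t : ℂ)) * I_sq

end Josephson

theorem stmt2_general (f φ₀ φ₀' P₀ Q₀ φ φ' : ℝ → ℝ) (C : ℝ)
    (hφ₀ : ∀ t, HasDerivAt φ₀ (φ₀' t) t)
    (hode₀ : ∀ t, φ₀' t + Real.sin (φ₀ t) = f t)
    (hP : ∀ t, HasDerivAt P₀ (Real.cos (φ₀ t)) t)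
    (hQ : ∀ t, HasDerivAt Q₀ (Real.exp (-P₀ t) * Real.sin (φ₀ t)) t)
    (hden : ∀ t, 1 + (C : ℂ) * ((Q₀ t : ℂ) + Complex.I * Complex.exp (-(P₀ t : ℂ))) ≠ 0)
    (hφ : ∀ t, HasDerivAt φ (φ' t) t)
    (hrel : ∀ t, Complex.exp (Complex.I * φ t) =
      Complex.exp (Complex.I * φ₀ t) *
        ((1 + (C : ℂ) * ((Q₀ t : ℂ) - Complex.I * Complex.exp (-(P₀ t : ℂ)))) /
         (1 + (C : ℂ) * ((Q₀ t : ℂ) + Complex.I * Complex.exp (-(P₀ t : ℂ)))))) :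
    ∀ t, φ' t + Real.sin (φ t) = f t := by
  intro t
  apply Josephson.add_sin_eq_of_hasDerivAt_cexp (hφ t)
  have hz := Josephson.hasDerivAt_riccati_mul_div
    (Josephson.hasDerivAt_cexp_of_add_sin_eq (hφ₀ t) (hode₀ t))
    (Josephson.hasDerivAt_numerator C (hP t) (hQ t))
    (Josephson.hasDerivAt_denominator C (hP t) (hQ t))
    (by ring) (Complex.exp_ne_zero _) (hden t)
  simpa only [mul_div_assoc, ← hrel] using hz

/-- If `φ₀` solves `φ' + sin φ = f` with `φ₀(0) = 0`, and `P₀, Q₀` are the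
associated integrals, then for any real `C` (with nonvanishing denominator)
any function `φ` with
`exp(iφ) = exp(iφ₀)(1 + C(Q₀ - i e^{-P₀}))/(1 + C(Q₀ + i e^{-P₀}))`
also solves `φ' + sin φ = f`. -/
theorem stmt2 (f φ₀ φ₀' P₀ Q₀ φ φ' : ℝ → ℝ) (C : ℝ)
    (hφ₀ : ∀ t, HasDerivAt φ₀ (φ₀' t) t)
    (hode₀ : ∀ t, φ₀' t + Real.sin (φ₀ t) = f t)
    (hφ₀0 : φ₀ 0 = 0)
    (hP : ∀ t, HasDerivAt P₀ (Real.cos (φ₀ t)) t) (hP0 : P₀ 0 = 0)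
    (hQ : ∀ t, HasDerivAt Q₀ (Real.exp (-P₀ t) * Real.sin (φ₀ t)) t) (hQ0 : Q₀ 0 = 0)
    (hden : ∀ t, 1 + (C : ℂ) * ((Q₀ t : ℂ) + Complex.I * Complex.exp (-(P₀ t : ℂ))) ≠ 0)
    (hφ : ∀ t, HasDerivAt φ (φ' t) t)
    (hrel : ∀ t, Complex.exp (Complex.I * φ t) =
      Complex.exp (Complex.I * φ₀ t) *
        ((1 + (C : ℂ) * ((Q₀ t : ℂ) - Complex.I * Complex.exp (-(P₀ t : ℂ)))) /
         (1 + (C : ℂ) * ((Q₀ t : ℂ) + Complex.I * Complex.exp (-(P₀ t : ℂ)))))) :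
    ∀ t, φ' t + Real.sin (φ t) = f t :=
  stmt2_general f φ₀ φ₀' P₀ Q₀ φ φ' C hφ₀ hode₀ hP hQ hden hφ hrel
end

section
/- Define for a solution φ of φ' + sin φ = f the complex function F(t) = Q(t) + i e^{-P(t)} where P(t) = ∫₀ᵗ cos φ, Q(t) = ∫₀ᵗ e^{-P} sin φ. Then F satisfies the ODE F'(t) = -i e^{iφ(t)} Im F(t) with initial condition F(0) = i. Conversely, any solution of this ODE with nonvanishing imaginary part arises this way. -/
/-!
Writing `F = u + i v`, the equation `F' = -i e^{iφ} Im F` splits into `u' = sin φ · v` and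
`v' = -cos φ · v`. For `F = Q + i e^{-P}` these are exactly the equations defining `Q` and `P`.
Conversely `v` starts at `1` and never vanishes, so it stays positive, and `P = -log v`, `Q = u`
recover `F`.
-/

open Complex

theorem hasDerivAt_iff_re_im {G : ℝ → ℂ} {g : ℂ} {t : ℝ} :
    HasDerivAt G g t ↔
      HasDerivAt (fun s => (G s).re) g.re t ∧ HasDerivAt (fun s => (G s).im) g.im t := by
  refine ⟨fun h => ⟨reCLM.hasFDerivAt.comp_hasDerivAt t h, imCLM.hasFDerivAt.comp_hasDerivAt t h⟩,
    fun ⟨hre, him⟩ => ?_⟩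
  have h : HasDerivAt (fun s => ((G s).re : ℂ) + (G s).im * I) (g.re + g.im * I) t :=
    hre.ofReal_comp.add (him.ofReal_comp.mul_const I)
  simpa only [re_add_im] using h

theorem re_neg_I_mul_exp_I_mul (θ y : ℝ) : (-I * exp (I * θ) * y).re = Real.sin θ * y := by
  rw [mul_comm I, exp_ofReal_mul_I]; simp [cos_ofReal_re, sin_ofReal_re]

theorem im_neg_I_mul_exp_I_mul (θ y : ℝ) : (-I * exp (I * θ) * y).im = -Real.cos θ * y := by
  rw [mul_comm I, exp_ofReal_mul_I]; simp [cos_ofReal_re, sin_ofReal_re]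

theorem hasDerivAt_neg_I_mul_exp_I_mul_im_iff {G : ℝ → ℂ} {θ t : ℝ} :
    HasDerivAt G (-I * exp (I * θ) * (G t).im) t ↔
      HasDerivAt (fun s => (G s).re) (Real.sin θ * (G t).im) t ∧
        HasDerivAt (fun s => (G s).im) (-Real.cos θ * (G t).im) t := by
  rw [hasDerivAt_iff_re_im, re_neg_I_mul_exp_I_mul, im_neg_I_mul_exp_I_mul]

theorem Continuous.pos_of_ne_zero {X : Type*} [TopologicalSpace X] [PreconnectedSpace X]
    {f : X → ℝ} (hf : Continuous f) {a : X} (ha : 0 < f a) (hne : ∀ x, f x ≠ 0) (x : X) :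
    0 < f x := by
  by_contra! hx
  obtain ⟨s, hs⟩ := intermediate_value_univ x a hf ⟨hx, ha.le⟩
  exact hne s hs

theorem re_ofReal_add_I_mul_exp_neg (q p : ℝ) : ((q : ℂ) + I * exp (-(p : ℂ))).re = q := by
  simp [← ofReal_neg, ← ofReal_exp]

theorem im_ofReal_add_I_mul_exp_neg (q p : ℝ) :
    ((q : ℂ) + I * exp (-(p : ℂ))).im = Real.exp (-p) := by
  simp [← ofReal_neg, ← ofReal_exp]

/-- For a solution `φ` of `φ' + sin φ = f`, the function
`F = Q + i e^{-P}` with `P = ∫₀ᵗ cos φ`, `Q = ∫₀ᵗ e^{-P} sin φ` satisfies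
`F' = -i e^{iφ} Im F`, `F(0) = i`; conversely any solution of this ODE with
`F(0) = i` and nonvanishing imaginary part arises this way. -/
theorem stmt4 (φ : ℝ → ℝ) :
    (∀ P Q : ℝ → ℝ,
      (∀ t, HasDerivAt P (Real.cos (φ t)) t) → P 0 = 0 →
      (∀ t, HasDerivAt Q (Real.exp (-P t) * Real.sin (φ t)) t) → Q 0 = 0 →
      (fun t : ℝ => (Q t : ℂ) + Complex.I * Complex.exp (-(P t : ℂ))) 0 = Complex.I ∧
      ∀ t, HasDerivAt (fun s : ℝ => (Q s : ℂ) + Complex.I * Complex.exp (-(P s : ℂ)))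
        (-Complex.I * Complex.exp (Complex.I * φ t) *
          (((Q t : ℂ) + Complex.I * Complex.exp (-(P t : ℂ))).im : ℂ)) t) ∧
    (∀ G : ℝ → ℂ,
      (∀ t, HasDerivAt G (-Complex.I * Complex.exp (Complex.I * φ t) * ((G t).im : ℂ)) t) →
      G 0 = Complex.I → (∀ t, (G t).im ≠ 0) →
      ∃ P Q : ℝ → ℝ,
        (∀ t, HasDerivAt P (Real.cos (φ t)) t) ∧ P 0 = 0 ∧
        (∀ t, HasDerivAt Q (Real.exp (-P t) * Real.sin (φ t)) t) ∧ Q 0 = 0 ∧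
        ∀ t, G t = (Q t : ℂ) + Complex.I * Complex.exp (-(P t : ℂ))) := by
  constructor
  · intro P Q hP hP0 hQ hQ0
    refine ⟨by simp [hP0, hQ0], fun t => hasDerivAt_neg_I_mul_exp_I_mul_im_iff.mpr ?_⟩
    simp only [re_ofReal_add_I_mul_exp_neg, im_ofReal_add_I_mul_exp_neg]
    refine ⟨by simpa only [mul_comm] using hQ t, ?_⟩
    convert (hP t).fun_neg.exp using 1
    ring
  · intro G hG hG0 hne
    have hreim := fun t => hasDerivAt_neg_I_mul_exp_I_mul_im_iff.mp (hG t)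
    have him0 : (G 0).im = 1 := by simp [hG0]
    have hpos : ∀ t, 0 < (G t).im :=
      Continuous.pos_of_ne_zero (continuous_im.comp (continuous_iff_continuousAt.2
        fun t => (hG t).continuousAt)) (him0 ▸ one_pos) hne
    refine ⟨fun t => -Real.log (G t).im, fun t => (G t).re, fun t => ?_, by simp [him0],
      fun t => ?_, by simp [hG0], fun t => ?_⟩
    · simpa only [neg_mul, neg_div, neg_neg, mul_div_cancel_right₀ _ (hne t)] using
        ((hreim t).2.log (hne t)).fun_neg
    · simpa only [neg_neg, Real.exp_log (hpos t), mul_comm] using (hreim t).1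
    · rw [← ofReal_neg, neg_neg, ← ofReal_exp, Real.exp_log (hpos t), mul_comm]
      exact (re_add_im (G t)).symm
end

section
/- Let φ₀ and φ be two solutions of φ' + sin φ = f related by exp(iφ) = exp(iφ₀)·(1 + C·conj(F₀))/(1 + C·F₀) for a real constant C, where F₀ = Q₀ + i e^{-P₀}. If F = Q + i e^{-P} are the integrals built from φ with F(0) = i, then F = (F₀ - C)/(1 + C F₀) identically. -/
/-!
The Möbius map `z ↦ (z - C)/(1 + C z)` with `C` real has derivative `(1 + C²)/(1 + C z)²` and
multiplies `Im z` by `(1 + C²)/|1 + C z|²`. Since `|1 + C z|² = (1 + C z)(1 + C z̄)`, it carries a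
solution `F₀` of `F' = -i e^{iφ₀} Im F` to a solution of the same equation with `e^{iφ₀}` replaced
by `e^{iφ₀}(1 + C F̄₀)/(1 + C F₀) = e^{iφ}`. Both sides of the claim therefore solve
`F' = -i e^{iφ} Im F`, whose right-hand side is `1`-Lipschitz in `F`, and agree (`= i`) at `t = 0`.
-/

open Complex ComplexConjugate

noncomputable def moebius (C : ℝ) (z : ℂ) : ℂ := (z - C) / (1 + C * z)

lemma moebius_I (C : ℝ) : moebius C I = I := by
  have hden : (1 : ℂ) + C * I ≠ 0 := fun h => by simpa using congrArg re h
  rw [moebius, div_eq_iff hden]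
  linear_combination (-(C : ℂ)) * I_sq

lemma im_moebius (C : ℝ) (z : ℂ) :
    (moebius C z).im = z.im * (1 + C ^ 2) / normSq (1 + C * z) := by
  simp only [moebius, div_im, sub_re, sub_im, add_re, add_im, mul_re, mul_im, ofReal_re,
    ofReal_im, one_re, one_im]
  ring

lemma hasDerivAt_moebius (C : ℝ) {z : ℂ} (hz : 1 + C * z ≠ 0) :
    HasDerivAt (moebius C) ((1 + C ^ 2) / (1 + C * z) ^ 2) z := by
  have h := ((hasDerivAt_id z).sub_const (C : ℂ)).div
    (((hasDerivAt_id z).const_mul (C : ℂ)).const_add 1) hz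
  refine h.congr_deriv ?_
  simp only [id, mul_one, one_mul]
  ring

lemma lipschitzWith_mul_im (c : ℂ) : LipschitzWith ‖c‖₊ fun z : ℂ => c * (z.im : ℂ) := by
  refine LipschitzWith.of_dist_le_mul fun z w => ?_
  simp only [dist_eq_norm, ← mul_sub, ← ofReal_sub, ← sub_im, norm_mul, norm_real,
    Real.norm_eq_abs, coe_nnnorm]
  exact mul_le_mul_of_nonneg_left (abs_im_le_norm _) (norm_nonneg c)

lemma lipschitzWith_neg_I_mul_exp_mul_im (θ : ℝ) :
    LipschitzWith 1 fun z : ℂ => -I * exp (I * θ) * (z.im : ℂ) := by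
  have hnorm : ‖-I * exp (I * θ)‖₊ = 1 := by
    rw [← NNReal.coe_inj, coe_nnnorm, mul_comm I, norm_mul, norm_neg, norm_I,
      norm_exp_ofReal_mul_I, NNReal.coe_one, one_mul]
  simpa only [hnorm] using lipschitzWith_mul_im (-I * exp (I * θ))

lemma HasDerivAt.moebius_of_hasDerivAt_neg_I_mul_im {F : ℝ → ℂ} {E : ℂ} {t C : ℝ}
    (hF : HasDerivAt F (-I * E * ((F t).im : ℂ)) t) (hden : 1 + C * F t ≠ 0) :
    HasDerivAt (fun s => moebius C (F s))
      (-I * (E * ((1 + C * conj (F t)) / (1 + C * F t))) * ((moebius C (F t)).im : ℂ)) t := by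
  refine ((hasDerivAt_moebius C hden).comp t hF).congr_deriv ?_
  have hconj : 1 + (C : ℂ) * conj (F t) = conj (1 + C * F t) := by simp
  have hconj_ne : conj (1 + (C : ℂ) * F t) ≠ 0 := (map_ne_zero _).2 hden
  have hnormSq : (normSq (1 + C * F t) : ℂ) = (1 + C * F t) * conj (1 + C * F t) :=
    (mul_conj _).symm
  rw [im_moebius, hconj, ofReal_div, ofReal_mul, hnormSq]
  push_cast
  field_simp

theorem stmt5_general (φ φ₀ : ℝ → ℝ) (F F₀ : ℝ → ℂ) (C : ℝ)
    (hF : ∀ t, HasDerivAt F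
      (-Complex.I * Complex.exp (Complex.I * φ t) * (((F t).im : ℝ) : ℂ)) t)
    (hF0 : F 0 = Complex.I)
    (hF₀ : ∀ t, HasDerivAt F₀
      (-Complex.I * Complex.exp (Complex.I * φ₀ t) * (((F₀ t).im : ℝ) : ℂ)) t)
    (hF₀0 : F₀ 0 = Complex.I)
    (hden : ∀ t, 1 + (C : ℂ) * F₀ t ≠ 0)
    (hrel : ∀ t, Complex.exp (Complex.I * φ t) =
      Complex.exp (Complex.I * φ₀ t) *
        ((1 + (C : ℂ) * (starRingEnd ℂ) (F₀ t)) / (1 + (C : ℂ) * F₀ t))) :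
    ∀ t, F t = (F₀ t - C) / (1 + (C : ℂ) * F₀ t) := by
  have hG : ∀ t, HasDerivAt (fun s => moebius C (F₀ s))
      (-I * exp (I * φ t) * ((moebius C (F₀ t)).im : ℂ)) t := fun t => by
    rw [hrel t]
    exact (hF₀ t).moebius_of_hasDerivAt_neg_I_mul_im (hden t)
  have hunique := ODE_solution_unique_univ (s := fun _ => Set.univ) (t₀ := 0)
    (fun t => (lipschitzWith_neg_I_mul_exp_mul_im (φ t)).lipschitzOnWith)
    (fun t => ⟨hF t, trivial⟩) (fun t => ⟨hG t, trivial⟩) (by rw [hF0, hF₀0, moebius_I])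
  exact fun t => congrFun hunique t

/-- If two solutions `φ₀, φ` of `φ' + sin φ = f` are related by
`exp(iφ) = exp(iφ₀)(1 + C conj(F₀))/(1 + C F₀)` with `C` real, where
`F₀, F` are the associated `Q + i e^{-P}` functions (normalized by `F(0) = F₀(0) = i`),
then `F = (F₀ - C)/(1 + C F₀)` identically. -/
theorem stmt5 (f φ φ' φ₀ φ₀' : ℝ → ℝ) (F F₀ : ℝ → ℂ) (C : ℝ)
    (hφ : ∀ t, HasDerivAt φ (φ' t) t) (hφ₀ : ∀ t, HasDerivAt φ₀ (φ₀' t) t)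
    (hode : ∀ t, φ' t + Real.sin (φ t) = f t)
    (hode₀ : ∀ t, φ₀' t + Real.sin (φ₀ t) = f t)
    (hF : ∀ t, HasDerivAt F
      (-Complex.I * Complex.exp (Complex.I * φ t) * (((F t).im : ℝ) : ℂ)) t)
    (hF0 : F 0 = Complex.I)
    (hF₀ : ∀ t, HasDerivAt F₀
      (-Complex.I * Complex.exp (Complex.I * φ₀ t) * (((F₀ t).im : ℝ) : ℂ)) t)
    (hF₀0 : F₀ 0 = Complex.I)
    (hden : ∀ t, 1 + (C : ℂ) * F₀ t ≠ 0)
    (hrel : ∀ t, Complex.exp (Complex.I * φ t) =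
      Complex.exp (Complex.I * φ₀ t) *
        ((1 + (C : ℂ) * (starRingEnd ℂ) (F₀ t)) / (1 + (C : ℂ) * F₀ t))) :
    ∀ t, F t = (F₀ t - C) / (1 + (C : ℂ) * F₀ t) :=
  stmt5_general φ φ₀ F F₀ C hF hF0 hF₀ hF₀0 hden hrel
end

section
/- The function δ(t) = F(t) - (F₀(t) - C)/(1 + C F₀(t)) satisfies the linear ODE dδ/dt = (1/2) e^{iφ₀} · ((1 + C·conj(F₀))/(1 + C F₀)) · (conj(δ) - δ). Hence if δ(0) = 0 then δ ≡ 0. -/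
/-!
With `w = 1 + C F₀` and `q = (F₀ - C) / w`, both equations read `F' = (e^{iφ}/2)(conj F - F)`.
The Möbius map gives `q' = (1 + C²) F₀' / w²`, and for real `C` it satisfies
`conj q - q = (1 + C²)(conj F₀ - F₀) / |w|²`; with `e^{iφ} = e^{iφ₀} conj w / w` this turns
`(F - q)'` into `k (conj δ - δ)` with `|k| = 1/2`. The right-hand side is then `1`-Lipschitz in `δ`
uniformly in `t` and vanishes at `δ = 0`, so ODE uniqueness forces `δ ≡ 0` once `δ(0) = 0`.
-/

open Complex ComplexConjugate

theorem Complex.neg_I_mul_mul_ofReal_im (E z : ℂ) :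
    -I * E * (z.im : ℂ) = E * (conj z - z) / 2 := by
  rw [im_eq_sub_conj]
  field_simp
  ring_nf

theorem Complex.norm_one_add_mul_conj_div (C : ℝ) {z : ℂ} (hw : 1 + C * z ≠ 0) :
    ‖(1 + C * conj z) / (1 + C * z)‖ = 1 := by
  have hconj : conj (1 + C * z) = 1 + C * conj z := by simp
  rw [← hconj, norm_div, norm_conj, div_self (norm_ne_zero_iff.mpr hw)]

theorem Complex.lipschitzWith_mul_conj_sub (k : ℂ) :
    LipschitzWith (2 * ‖k‖₊) fun z => k * (conj z - z) := by
  refine LipschitzWith.of_dist_le_mul fun x y => ?_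
  have hconj : ‖conj (x - y) - (x - y)‖ ≤ 2 * ‖x - y‖ := by
    linarith [norm_sub_le (conj (x - y)) (x - y), norm_conj (x - y)]
  calc dist (k * (conj x - x)) (k * (conj y - y)) = ‖k‖ * ‖conj (x - y) - (x - y)‖ := by
        rw [dist_eq_norm, ← norm_mul, map_sub]; ring_nf
    _ ≤ ‖k‖ * (2 * ‖x - y‖) := by gcongr
    _ = (2 * ‖k‖₊ : NNReal) * dist x y := by push_cast; rw [dist_eq_norm]; ring

theorem Complex.conj_moebius_sub_moebius (C : ℝ) (z : ℂ) :
    conj ((z - C) / (1 + C * z)) - (z - C) / (1 + C * z) =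
      (1 + C ^ 2) * (conj z - z) / ((1 + C * conj z) * (1 + C * z)) := by
  have hconj : conj (1 + C * z) = 1 + C * conj z := by simp
  by_cases hw : 1 + (C : ℂ) * z = 0
  · simp [hw, ← hconj]
  have hw' : 1 + (C : ℂ) * conj z ≠ 0 := by rwa [← hconj, map_ne_zero]
  simp only [map_div₀, map_sub, hconj, conj_ofReal]
  rw [div_sub_div _ _ hw' hw]
  ring

theorem HasDerivAt.moebius {f : ℝ → ℂ} {f' C : ℂ} {t : ℝ} (hf : HasDerivAt f f' t)
    (hw : 1 + C * f t ≠ 0) :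
    HasDerivAt (fun s => (f s - C) / (1 + C * f s))
      ((1 + C ^ 2) * f' / (1 + C * f t) ^ 2) t :=
  ((hf.sub_const C).fun_div ((hf.const_mul C).const_add 1) hw).congr_deriv (by ring)

theorem eq_zero_of_hasDerivAt_of_lipschitzWith {E : Type*} [NormedAddCommGroup E]
    [NormedSpace ℝ E] {v : ℝ → E → E} {K : NNReal} {f : ℝ → E} {t₀ : ℝ}
    (hv : ∀ t, LipschitzWith K (v t)) (hv₀ : ∀ t, v t 0 = 0)
    (hf : ∀ t, HasDerivAt f (v t (f t)) t) (hf₀ : f t₀ = 0) : f = 0 :=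
  ODE_solution_unique_univ (s := fun _ => Set.univ) (fun t => (hv t).lipschitzOnWith)
    (fun t => ⟨hf t, trivial⟩)
    (fun t => ⟨by simp [hv₀], trivial⟩) hf₀

theorem hasDerivAt_sub_moebius {F F₀ : ℝ → ℂ} {E₀ : ℂ} {C t : ℝ}
    (hw : 1 + (C : ℂ) * F₀ t ≠ 0)
    (hF : HasDerivAt F
      (E₀ * ((1 + C * conj (F₀ t)) / (1 + C * F₀ t)) * (conj (F t) - F t) / 2) t)
    (hF₀ : HasDerivAt F₀ (E₀ * (conj (F₀ t) - F₀ t) / 2) t) :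
    HasDerivAt (fun s => F s - (F₀ s - C) / (1 + C * F₀ s))
      (1 / 2 * E₀ * ((1 + C * conj (F₀ t)) / (1 + C * F₀ t)) *
        (conj (F t - (F₀ t - C) / (1 + C * F₀ t)) - (F t - (F₀ t - C) / (1 + C * F₀ t)))) t := by
  refine (hF.sub (hF₀.moebius hw)).congr_deriv ?_
  have hw' : 1 + (C : ℂ) * conj (F₀ t) ≠ 0 := by
    simpa using (map_ne_zero (starRingEnd ℂ)).mpr hw
  rw [map_sub, sub_sub_sub_comm, conj_moebius_sub_moebius]
  field_simp

/-- The function `δ = F - (F₀ - C)/(1 + C F₀)` satisfies the linear ODE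
`δ' = (1/2) e^{iφ₀} ((1 + C conj F₀)/(1 + C F₀)) (conj δ - δ)`; hence if
`δ(0) = 0` then `δ ≡ 0`. -/
theorem stmt6 (φ φ₀ : ℝ → ℝ) (F F₀ : ℝ → ℂ) (C : ℝ)
    (hF : ∀ t, HasDerivAt F
      (-Complex.I * Complex.exp (Complex.I * φ t) * (((F t).im : ℝ) : ℂ)) t)
    (hF₀ : ∀ t, HasDerivAt F₀
      (-Complex.I * Complex.exp (Complex.I * φ₀ t) * (((F₀ t).im : ℝ) : ℂ)) t)
    (hden : ∀ t, 1 + (C : ℂ) * F₀ t ≠ 0)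
    (hrel : ∀ t, Complex.exp (Complex.I * φ t) =
      Complex.exp (Complex.I * φ₀ t) *
        ((1 + (C : ℂ) * (starRingEnd ℂ) (F₀ t)) / (1 + (C : ℂ) * F₀ t))) :
    (∀ t, HasDerivAt (fun s => F s - (F₀ s - C) / (1 + (C : ℂ) * F₀ s))
      ((1 / 2) * Complex.exp (Complex.I * φ₀ t) *
        ((1 + (C : ℂ) * (starRingEnd ℂ) (F₀ t)) / (1 + (C : ℂ) * F₀ t)) *
        ((starRingEnd ℂ) (F t - (F₀ t - C) / (1 + (C : ℂ) * F₀ t)) -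
          (F t - (F₀ t - C) / (1 + (C : ℂ) * F₀ t)))) t) ∧
    (F 0 - (F₀ 0 - C) / (1 + (C : ℂ) * F₀ 0) = 0 →
      ∀ t, F t - (F₀ t - C) / (1 + (C : ℂ) * F₀ t) = 0) := by
  have hδ := fun t => hasDerivAt_sub_moebius (hden t)
    ((hF t).congr_deriv (by rw [neg_I_mul_mul_ofReal_im, hrel]))
    ((hF₀ t).congr_deriv (neg_I_mul_mul_ofReal_im _ _))
  refine ⟨hδ, fun h₀ t => congrFun (eq_zero_of_hasDerivAt_of_lipschitzWith (K := 1)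
    (fun t => (lipschitzWith_mul_conj_sub _).weaken ?_) (fun t => by simp) hδ h₀) t⟩
  rw [← NNReal.coe_le_coe, NNReal.coe_mul, coe_nnnorm, norm_mul, norm_mul,
    norm_one_add_mul_conj_div C (hden t), mul_comm I, norm_exp_ofReal_mul_I]
  norm_num
end

section
/- For two solutions φ, φ₀ of φ' + sin φ = f, the functional C[φ,φ₀] defined by C[φ,φ₀]⁻¹ = -Q₀ + i e^{-P₀}(ζ₀+ζ)/(ζ₀-ζ) is a constant in t and is antisymmetric: C[φ,φ₀] = -C[φ₀,φ]. -/
/-!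
Put `w = (ζ₀ + ζ) / (ζ₀ - ζ)`. Since `ζ' = i (f - sin φ) ζ` and `sin φ = i (ζ⁻¹ - ζ) / 2`, the
forcing `f` drops out of `w'`, and `w` solves the linear equation `w' = cos φ₀ · w - i sin φ₀`.
As `P₀' = cos φ₀`, the factor `e^{-P₀}` integrates it: `(i e^{-P₀} w)' = e^{-P₀} sin φ₀ = Q₀'`, so
`C[φ,φ₀]⁻¹ = -Q₀ + i e^{-P₀} w` is constant. At `t = 0` it equals `i w(0)`, and exchanging `φ`
and `φ₀` changes the sign of `w`, which gives the antisymmetry.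
-/

open Complex

noncomputable def cayleyRatio (φ₀ φ : ℝ → ℝ) (t : ℝ) : ℂ :=
  (cexp (I * φ₀ t) + cexp (I * φ t)) / (cexp (I * φ₀ t) - cexp (I * φ t))

/-- `invC P₀ Q₀ (cayleyRatio φ₀ φ)` is the paper's `C[φ,φ₀]⁻¹`. -/
noncomputable def invC (P₀ Q₀ : ℝ → ℝ) (w : ℝ → ℂ) (t : ℝ) : ℂ :=
  -(Q₀ t : ℂ) + I * cexp (-(P₀ t : ℂ)) * w t

lemma ofReal_sin_eq_exp_I_mul (x : ℝ) :
    (Real.sin x : ℂ) = I * ((cexp (I * x))⁻¹ - cexp (I * x)) / 2 := by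
  rw [ofReal_sin, sin, ← exp_neg, neg_mul, mul_comm (x : ℂ) I]
  ring

lemma ofReal_cos_eq_exp_I_mul (x : ℝ) :
    (Real.cos x : ℂ) = (cexp (I * x) + (cexp (I * x))⁻¹) / 2 := by
  rw [ofReal_cos, cos, ← exp_neg, neg_mul, mul_comm (x : ℂ) I]

lemma HasDerivAt.cexp_I_mul_ofReal {θ : ℝ → ℝ} {d t : ℝ} (h : HasDerivAt θ d t) :
    HasDerivAt (fun u => cexp (I * θ u)) (cexp (I * θ t) * (I * d)) t :=
  (h.ofReal_comp.const_mul I).cexp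

theorem hasDerivAt_cayleyRatio {φ φ₀ : ℝ → ℝ} {F t : ℝ}
    (hφ : HasDerivAt φ (F - Real.sin (φ t)) t) (hφ₀ : HasDerivAt φ₀ (F - Real.sin (φ₀ t)) t)
    (hne : cexp (I * φ₀ t) ≠ cexp (I * φ t)) :
    HasDerivAt (cayleyRatio φ₀ φ)
      (Real.cos (φ₀ t) * cayleyRatio φ₀ φ t - I * Real.sin (φ₀ t)) t := by
  have hζ := hφ.cexp_I_mul_ofReal
  have hζ₀ := hφ₀.cexp_I_mul_ofReal
  refine ((hζ₀.add hζ).div (hζ₀.sub hζ) (sub_ne_zero.mpr hne)).congr_deriv ?_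
  simp only [cayleyRatio, Pi.add_apply, Pi.sub_apply, ofReal_sub, ofReal_cos_eq_exp_I_mul,
    ofReal_sin_eq_exp_I_mul]
  have hζ0 := exp_ne_zero (I * φ t)
  have hζ₀0 := exp_ne_zero (I * φ₀ t)
  have hsub := sub_ne_zero.mpr hne
  field_simp
  ring_nf
  rw [I_sq]
  ring

theorem hasDerivAt_invC_zero {P Q : ℝ → ℝ} {w : ℝ → ℂ} {a b t : ℝ}
    (hw : HasDerivAt w (a * w t - I * b) t) (hP : HasDerivAt P a t)
    (hQ : HasDerivAt Q (Real.exp (-P t) * b) t) :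
    HasDerivAt (invC P Q w) 0 t := by
  refine (hQ.ofReal_comp.neg.add ((hP.ofReal_comp.neg.cexp.const_mul I).mul hw)).congr_deriv ?_
  simp only [Pi.neg_apply, ofReal_mul, ofReal_exp, ofReal_neg]
  linear_combination (-cexp (-(P t : ℂ)) * b) * I_sq

theorem invC_cayleyRatio_eq {f φ φ' φ₀ φ₀' P₀ Q₀ : ℝ → ℝ}
    (hφ : ∀ t, HasDerivAt φ (φ' t) t) (hφ₀ : ∀ t, HasDerivAt φ₀ (φ₀' t) t)
    (hode : ∀ t, φ' t + Real.sin (φ t) = f t)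
    (hode₀ : ∀ t, φ₀' t + Real.sin (φ₀ t) = f t)
    (hP₀ : ∀ t, HasDerivAt P₀ (Real.cos (φ₀ t)) t)
    (hQ₀ : ∀ t, HasDerivAt Q₀ (Real.exp (-P₀ t) * Real.sin (φ₀ t)) t)
    (hne : ∀ t, cexp (I * φ t) ≠ cexp (I * φ₀ t)) (t s : ℝ) :
    invC P₀ Q₀ (cayleyRatio φ₀ φ) t = invC P₀ Q₀ (cayleyRatio φ₀ φ) s := by
  have hderiv (u : ℝ) : HasDerivAt (invC P₀ Q₀ (cayleyRatio φ₀ φ)) 0 u := by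
    refine hasDerivAt_invC_zero (hasDerivAt_cayleyRatio (F := f u) ?_ ?_ (hne u).symm)
      (hP₀ u) (hQ₀ u)
    · rw [← hode u, add_sub_cancel_right]; exact hφ u
    · rw [← hode₀ u, add_sub_cancel_right]; exact hφ₀ u
  exact is_const_of_deriv_eq_zero (fun u => (hderiv u).differentiableAt)
    (fun u => (hderiv u).deriv) t s

lemma cayleyRatio_swap (φ₀ φ : ℝ → ℝ) (t : ℝ) : cayleyRatio φ φ₀ t = -cayleyRatio φ₀ φ t := by
  rw [cayleyRatio, cayleyRatio, ← neg_sub, div_neg, add_comm]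

lemma invC_zero {P Q : ℝ → ℝ} (w : ℝ → ℂ) (hP0 : P 0 = 0) (hQ0 : Q 0 = 0) :
    invC P Q w 0 = I * w 0 := by
  simp [invC, hP0, hQ0]

/-- For two solutions `φ, φ₀` of `φ' + sin φ = f` with `e^{iφ} ≠ e^{iφ₀}`,
the functional `C[φ,φ₀]` defined by
`C[φ,φ₀]⁻¹ = -Q₀ + i e^{-P₀}(ζ₀+ζ)/(ζ₀-ζ)` is constant in `t` and
antisymmetric: `C[φ,φ₀] = -C[φ₀,φ]`. -/
theorem stmt7 (f φ φ' φ₀ φ₀' P Q P₀ Q₀ : ℝ → ℝ)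
    (hφ : ∀ t, HasDerivAt φ (φ' t) t) (hφ₀ : ∀ t, HasDerivAt φ₀ (φ₀' t) t)
    (hode : ∀ t, φ' t + Real.sin (φ t) = f t)
    (hode₀ : ∀ t, φ₀' t + Real.sin (φ₀ t) = f t)
    (hP₀ : ∀ t, HasDerivAt P₀ (Real.cos (φ₀ t)) t) (hP₀0 : P₀ 0 = 0)
    (hQ₀ : ∀ t, HasDerivAt Q₀ (Real.exp (-P₀ t) * Real.sin (φ₀ t)) t) (hQ₀0 : Q₀ 0 = 0)
    (hP : ∀ t, HasDerivAt P (Real.cos (φ t)) t) (hP0 : P 0 = 0)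
    (hQ : ∀ t, HasDerivAt Q (Real.exp (-P t) * Real.sin (φ t)) t) (hQ0 : Q 0 = 0)
    (hne : ∀ t, Complex.exp (Complex.I * φ t) ≠ Complex.exp (Complex.I * φ₀ t)) :
    (∀ t s : ℝ,
      (-(Q₀ t : ℂ) + Complex.I * Complex.exp (-(P₀ t : ℂ)) *
          ((Complex.exp (Complex.I * φ₀ t) + Complex.exp (Complex.I * φ t)) /
           (Complex.exp (Complex.I * φ₀ t) - Complex.exp (Complex.I * φ t))))⁻¹ =
      (-(Q₀ s : ℂ) + Complex.I * Complex.exp (-(P₀ s : ℂ)) *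
          ((Complex.exp (Complex.I * φ₀ s) + Complex.exp (Complex.I * φ s)) /
           (Complex.exp (Complex.I * φ₀ s) - Complex.exp (Complex.I * φ s))))⁻¹) ∧
    (∀ t : ℝ,
      (-(Q₀ t : ℂ) + Complex.I * Complex.exp (-(P₀ t : ℂ)) *
          ((Complex.exp (Complex.I * φ₀ t) + Complex.exp (Complex.I * φ t)) /
           (Complex.exp (Complex.I * φ₀ t) - Complex.exp (Complex.I * φ t))))⁻¹ =
      -((-(Q t : ℂ) + Complex.I * Complex.exp (-(P t : ℂ)) *
          ((Complex.exp (Complex.I * φ t) + Complex.exp (Complex.I * φ₀ t)) /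
           (Complex.exp (Complex.I * φ t) - Complex.exp (Complex.I * φ₀ t))))⁻¹)) := by
  have hconst := invC_cayleyRatio_eq hφ hφ₀ hode hode₀ hP₀ hQ₀ hne
  have hconst' := invC_cayleyRatio_eq hφ₀ hφ hode₀ hode hP hQ fun u => (hne u).symm
  refine ⟨fun t s => congrArg (·⁻¹) (hconst t s), fun t => ?_⟩
  change (invC P₀ Q₀ (cayleyRatio φ₀ φ) t)⁻¹ = -(invC P Q (cayleyRatio φ φ₀) t)⁻¹
  rw [hconst t 0, hconst' t 0, invC_zero _ hP₀0 hQ₀0, invC_zero _ hP0 hQ0, cayleyRatio_swap,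
    mul_neg, inv_neg]
end
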